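/- arXiv:2010.10672 — 2 statements merged into one kernel-verified Lean document; each statement's English description precedes it below -/
import Mathlib

section
/- For every integer q ≥ 3 and every λ ∈ (0, 1), the choice δ = λ/(16q) satisfies (1 − (λq − λqδ)/(1+λ(q−1)))^λ · (1 + λδq/(1+λ(q−1−δq)))^{4(1+λ(q−1))/q} · (1 + λqδ/(1−λ))^{4(1−λ)(q−1)/q} < 1 − λ²/4. -/
/-!
Since `log a ≤ a - 1`, every factor `a ^ p` is at most `exp (p * (a - 1))`. With `δ q = λ / 16`
the three exponents are at most `-(47/48) λ²`, `λ² / 4` and `λ² / 4`, so the product is at most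
`exp (-(23/48) λ²) ≤ (1 + (23/48) λ²)⁻¹`, which is below `1 - λ² / 4` for `λ < 1`.
-/

open Real

theorem Real.rpow_le_exp_mul_sub_one {a p : ℝ} (ha : 0 < a) (hp : 0 ≤ p) :
    a ^ p ≤ exp (p * (a - 1)) := by
  rw [rpow_def_of_pos ha, mul_comm p]
  exact exp_le_exp.2 (mul_le_mul_of_nonneg_right (log_le_sub_one_of_pos ha) hp)

theorem Real.exp_neg_le_inv_one_add {y : ℝ} (hy : 0 ≤ y) : exp (-y) ≤ (1 + y)⁻¹ := by
  rw [exp_neg]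
  exact inv_anti₀ (by positivity) (by linarith [add_one_le_exp y])

section ContractionFactors

variable {q lam : ℝ}

theorem first_factor_le_exp (hq : 3 ≤ q) (h0 : 0 < lam) (h1 : lam < 1) :
    (1 - (lam * q - lam ^ 2 / 16) / (1 + lam * (q - 1))) ^ lam
      ≤ exp (-(47 / 48) * lam ^ 2) := by
  have hD : 0 < 1 + lam * (q - 1) := by nlinarith
  have hbase : 0 < 1 - (lam * q - lam ^ 2 / 16) / (1 + lam * (q - 1)) := by
    rw [sub_pos, div_lt_one hD]
    nlinarith
  have hratio : 47 / 48 * lam ≤ (lam * q - lam ^ 2 / 16) / (1 + lam * (q - 1)) := by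
    rw [le_div_iff₀ hD]
    nlinarith [mul_nonneg (mul_nonneg h0.le (sub_nonneg.2 h1.le)) (sub_nonneg.2 hq)]
  refine (rpow_le_exp_mul_sub_one hbase h0.le).trans (exp_le_exp.2 ?_)
  nlinarith

theorem second_factor_le_exp (hq : 2 ≤ q) (h0 : 0 < lam) (h1 : lam < 1) :
    (1 + lam ^ 2 / 16 / (1 + lam * (q - 1 - lam / 16))) ^ (4 * (1 + lam * (q - 1)) / q)
      ≤ exp (lam ^ 2 / 4) := by
  have hD : 1 ≤ 1 + lam * (q - 1 - lam / 16) := by nlinarith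
  have hexp : 4 * (1 + lam * (q - 1)) / q ≤ 4 := by
    rw [div_le_iff₀ (by linarith)]
    nlinarith
  have hexp0 : 0 ≤ 4 * (1 + lam * (q - 1)) / q := by
    apply div_nonneg _ (by linarith); nlinarith
  have hstep : lam ^ 2 / 16 / (1 + lam * (q - 1 - lam / 16)) ≤ lam ^ 2 / 16 :=
    div_le_self (by positivity) hD
  refine (rpow_le_exp_mul_sub_one (by positivity) hexp0).trans (exp_le_exp.2 ?_)
  rw [add_sub_cancel_left]
  nlinarith [mul_le_mul hexp hstep (by positivity) (by norm_num)]

theorem third_factor_le_exp (hq : 1 ≤ q) (h0 : 0 < lam) (h1 : lam < 1) :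
    (1 + lam ^ 2 / 16 / (1 - lam)) ^ (4 * (1 - lam) * (q - 1) / q)
      ≤ exp (lam ^ 2 / 4) := by
  have h1l : 0 < 1 - lam := by linarith
  have hq0 : 0 < q := by linarith
  have hexp0 : 0 ≤ 4 * (1 - lam) * (q - 1) / q := by
    have := sub_nonneg.2 hq; positivity
  refine (rpow_le_exp_mul_sub_one (by positivity) hexp0).trans (exp_le_exp.2 ?_)
  have heq : 4 * (1 - lam) * (q - 1) / q * (1 + lam ^ 2 / 16 / (1 - lam) - 1)
      = lam ^ 2 / 4 * ((q - 1) / q) := by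
    field_simp
    ring
  rw [heq]
  exact mul_le_of_le_one_right (by positivity) ((div_le_one hq0).2 (by linarith))

theorem exp_neg_lt_one_sub_sq_div_four (h0 : 0 < lam) (h1 : lam < 1) :
    exp (-(23 / 48) * lam ^ 2) < 1 - lam ^ 2 / 4 := by
  have hsq : lam ^ 2 < 1 := by nlinarith
  calc exp (-(23 / 48) * lam ^ 2) = exp (-(23 / 48 * lam ^ 2)) := by ring_nf
    _ ≤ (1 + 23 / 48 * lam ^ 2)⁻¹ := exp_neg_le_inv_one_add (by positivity)
    _ < 1 - lam ^ 2 / 4 := by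
      rw [inv_lt_iff_one_lt_mul₀ (by positivity)]
      nlinarith [mul_pos (pow_pos h0 2) (sub_pos.2 hsq)]

end ContractionFactors

/-- For every integer `q ≥ 3` and every `λ ∈ (0,1)`, the choice
`δ = λ/(16q)` satisfies the contraction condition with rate `ν = λ²/4`. -/
theorem delta_choice_satisfies_contraction
    (q : ℕ) (hq : 3 ≤ q) (lam : ℝ) (hlam0 : 0 < lam) (hlam1 : lam < 1)
    (δ : ℝ) (hδ : δ = lam / (16 * q)) :
    (1 - (lam * q - lam * q * δ) / (1 + lam * ((q : ℝ) - 1))) ^ lam *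
      (1 + lam * δ * q / (1 + lam * ((q : ℝ) - 1 - δ * q)))
        ^ (4 * (1 + lam * ((q : ℝ) - 1)) / q) *
      (1 + lam * q * δ / (1 - lam)) ^ (4 * (1 - lam) * ((q : ℝ) - 1) / q)
    < 1 - lam ^ 2 / 4 := by
  have hq3 : (3 : ℝ) ≤ q := by exact_mod_cast hq
  have hδq : δ * q = lam / 16 := by rw [hδ]; field_simp
  rw [show lam * q * δ = lam ^ 2 / 16 by linear_combination lam * hδq,
    show lam * δ * q = lam ^ 2 / 16 by linear_combination lam * hδq, hδq]
  -- positivity of the second and third bases, for the side goals of `gcongr`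
  have hD : 0 < 1 + lam * ((q : ℝ) - 1 - lam / 16) := by nlinarith
  have h1l : 0 < 1 - lam := by linarith
  calc _ ≤ exp (-(47 / 48) * lam ^ 2) * exp (lam ^ 2 / 4) * exp (lam ^ 2 / 4) := by
        gcongr ?_ * ?_ * ?_
        · exact first_factor_le_exp hq3 hlam0 hlam1
        · exact second_factor_le_exp (by linarith) hlam0 hlam1
        · exact third_factor_le_exp (by linarith) hlam0 hlam1
    _ = exp (-(23 / 48) * lam ^ 2) := by rw [← exp_add, ← exp_add]; ring_nf
    _ < 1 - lam ^ 2 / 4 := exp_neg_lt_one_sub_sq_div_four hlam0 hlam1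
end

section
/- For the broadcast process on the infinite rooted d-regular tree with q ≥ 3 communities, there exists a constant C(q) such that if λ²d > C(q) and λ is large enough that p < 0.01, then for every fixed d there exists k₀ = k₀(d, λ, q) so that for all k ≥ k₀, E_k ≥ 1 − 2(1−λ)(q−1)/(q·(0.16d − λ)). -/
/-!
Take `C = 1000` and estimate the root by recursive majority: every vertex takes the plurality of
the estimates of its `d` children, starting from the labels at depth `k`. Given that the root is
labelled `a`, the `d` subtrees are i.i.d., and the estimate coming from one of them is wrong with
probability at most `p + e_k(a)`, where `e_k(a)` is the error probability at depth `k`: either the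
child's label differs from `a`, or the subtree's own estimate fails. An exponential Markov bound
for the plurality of `d` independent votes that are each wrong with probability at most `η`
gives `e_{k+1}(a) ≤ (2√η)^d`. For `d > 1000` and `p < 0.01`, `E = 2p/(0.16d - λ)` is stable
under this recursion, so `e_k ≤ E` for every `k`. The recursive-majority estimate depends only
on the depth-`k` labels, so `E_k ≥ 1 - E` for every `k`. Finally `2(1-λ)(q-1)/q = 2p`.
-/

open MeasureTheory ProbabilityTheory Filter

/-- Transition matrix of the broadcast process. -/
noncomputable def transM (q : ℕ) (p : ℝ) (a b : Fin q) : ℝ :=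
  if a = b then 1 - p else p / ((q : ℝ) - 1)

/-- The σ-algebra generated by the depth-`m` labels of the process `leaves`. -/
noncomputable def leafAlg {Ω : Type} [MeasurableSpace Ω] {q d : ℕ}
    (leaves : List (Fin d) → Ω → Fin q) (m : ℕ) : MeasurableSpace Ω :=
  MeasurableSpace.comap (fun ω => fun f : Fin m → Fin d => leaves (List.ofFn f) ω)
    inferInstance

/-- Posterior probability that the root label equals `i`, given the depth-`m` labels. -/
noncomputable def posterior {Ω : Type} [MeasurableSpace Ω] {q d : ℕ} (μ : Measure Ω)
    (root : Ω → Fin q) (leaves : List (Fin d) → Ω → Fin q) (i : Fin q) (m : ℕ) : Ω → ℝ :=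
  μ[Set.indicator {ω | root ω = i} (fun _ => (1 : ℝ)) | leafAlg leaves m]

/-- Optimal probability of reconstructing the root from depth-`m` labels. -/
noncomputable def optRecon {Ω : Type} [MeasurableSpace Ω] {q d : ℕ} (μ : Measure Ω)
    (root : Ω → Fin q) (leaves : List (Fin d) → Ω → Fin q) (m : ℕ) : ℝ :=
  ∫ ω, ⨆ i : Fin q, posterior μ root leaves i m ω ∂μ

lemma List.ofFn_snoc {α : Type*} {n : ℕ} (g : Fin n → α) (c : α) :
    List.ofFn (Fin.snoc g c : Fin (n + 1) → α) = List.ofFn g ++ [c] := by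
  rw [List.ofFn_succ']
  simp

lemma Fintype.prod_pi_fin_succ_snoc {α M : Type*} [Fintype α] [CommMonoid M] {n : ℕ}
    (F : (Fin (n + 1) → α) → M) : ∏ f, F f = ∏ c, ∏ g : Fin n → α, F (Fin.snoc g c) :=
  (Fintype.prod_equiv (Fin.snocEquiv fun _ => α) _ _ fun _ => rfl).symm.trans
    (Fintype.prod_prod_type _)

section Plurality

open Finset

variable {ι α : Type*} [Fintype ι] [Fintype α] [DecidableEq α] [Nonempty α]

noncomputable def plurality (w : ι → α) : α :=
  (univ.exists_max_image (fun a => #{c | w c = a}) univ_nonempty).choose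

lemma card_filter_le_card_filter_plurality (w : ι → α) (a : α) :
    #{c | w c = a} ≤ #{c | w c = plurality w} :=
  (univ.exists_max_image (fun a => #{c | w c = a}) univ_nonempty).choose_spec.2 a (mem_univ a)

lemma card_filter_eq_le_card_filter_ne_of_plurality_ne {w : ι → α} {a : α}
    (h : plurality w ≠ a) : #{c | w c = a} ≤ #{c | w c ≠ a} :=
  (card_filter_le_card_filter_plurality w a).trans <| card_le_card fun c hc => by
    simp only [mem_filter, mem_univ, true_and] at hc ⊢
    exact hc ▸ h

lemma one_le_prod_of_plurality_ne {w : ι → α} {a : α} (h : plurality w ≠ a) {r : ℝ}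
    (hr0 : 0 < r) (hr1 : r ≤ 1) : 1 ≤ ∏ c, if w c = a then r else r⁻¹ := by
  rw [prod_ite, prod_const, prod_const]
  calc (1 : ℝ) = r ^ #{c | w c = a} * r⁻¹ ^ #{c | w c = a} := by
        rw [← mul_pow, mul_inv_cancel₀ hr0.ne', one_pow]
    _ ≤ r ^ #{c | w c = a} * r⁻¹ ^ #{c | w c ≠ a} := by
        gcongr r ^ _ * ?_
        exact pow_le_pow_right₀ ((one_le_inv₀ hr0).mpr hr1)
          (card_filter_eq_le_card_filter_ne_of_plurality_ne h)

/-- Chernoff bound: if each of `card ι` independent votes, drawn from `κ`, is wrong with probability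
at most `η`, then their plurality is wrong with probability at most `(2 √η) ^ card ι`. -/
theorem sum_prod_plurality_ne_le [DecidableEq ι] {β : Type*} [Fintype β] (F : β → α) (κ : β → ℝ)
    (hκ0 : ∀ x, 0 ≤ κ x) (hκ1 : ∑ x, κ x = 1) (a : α) {η : ℝ} (hη0 : 0 < η) (hη1 : η ≤ 1)
    (hη : ∑ x with F x ≠ a, κ x ≤ η) :
    ∑ f : ι → β with plurality (fun c => F (f c)) ≠ a, ∏ c, κ (f c)
      ≤ (2 * √η) ^ Fintype.card ι := by
  set r := √η
  have hr0 : 0 < r := Real.sqrt_pos.mpr hη0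
  have hr1 : r ≤ 1 := Real.sqrt_le_one.mpr hη1
  set φ : α → ℝ := fun y => if y = a then r else r⁻¹
  have hφ0 : ∀ y, 0 ≤ φ y := fun y => by dsimp only [φ]; split_ifs <;> positivity
  calc ∑ f : ι → β with plurality (fun c => F (f c)) ≠ a, ∏ c, κ (f c)
      ≤ ∑ f : ι → β, ∏ c, φ (F (f c)) * κ (f c) := by
        rw [sum_filter]
        refine sum_le_sum fun f _ => ?_
        split_ifs with h
        · rw [prod_mul_distrib]
          exact le_mul_of_one_le_left (prod_nonneg fun c _ => hκ0 _)
            (one_le_prod_of_plurality_ne h hr0 hr1)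
        · exact prod_nonneg fun c _ => mul_nonneg (hφ0 _) (hκ0 _)
    _ = ∏ _c : ι, ∑ x, φ (F x) * κ x := (Fintype.prod_sum fun _ x => φ (F x) * κ x).symm
    _ = (∑ x, φ (F x) * κ x) ^ Fintype.card ι := prod_const _
    _ ≤ (2 * r) ^ Fintype.card ι := by
        gcongr
        · exact sum_nonneg fun x _ => mul_nonneg (hφ0 _) (hκ0 _)
        calc ∑ x, φ (F x) * κ x ≤ ∑ x, (r * κ x + if F x ≠ a then r⁻¹ * κ x else 0) :=
              sum_le_sum fun x _ => by
                dsimp only [φ]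
                split_ifs <;> nlinarith [hκ0 x, inv_pos.mpr hr0]
          _ = r + r⁻¹ * ∑ x with F x ≠ a, κ x := by
              rw [sum_add_distrib, ← mul_sum, hκ1, mul_one, ← sum_filter, mul_sum]
          _ ≤ r + r⁻¹ * η := by gcongr
          _ = 2 * r := by rw [← Real.sq_sqrt hη0.le]; field_simp; ring

end Plurality

section Posterior

variable {Ω ι : Type*} {m m₀ : MeasurableSpace Ω} {μ : Measure Ω}

lemma MeasureTheory.Integrable.iSup [Fintype ι] [Nonempty ι] {f : ι → Ω → ℝ}
    (hf : ∀ i, Integrable (f i) μ) : Integrable (fun ω => ⨆ i, f i ω) μ := by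
  have h : (fun ω => ⨆ i, f i ω) = Finset.univ.sup' Finset.univ_nonempty f := by
    ext ω
    rw [Finset.sup'_apply, Finset.sup'_univ_eq_ciSup]
  rw [h]
  exact Finset.sup'_induction (p := fun g => Integrable g μ) _ _ (fun _ h₁ _ h₂ => h₁.sup h₂)
    fun i _ => hf i

/-- On `{T = i}` the posterior probability of `i` is at most the maximal one, and its integral
there is the probability of `{T = i, X = i}`. -/
theorem measureReal_eq_le_integral_iSup_condExp [Fintype ι] [Nonempty ι] (hm : m ≤ m₀)
    [IsFiniteMeasure μ] {X T : Ω → ι} (hX : ∀ i, MeasurableSet[m₀] {ω | X ω = i})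
    (hT : ∀ i, MeasurableSet[m] {ω | T ω = i}) :
    μ.real {ω | T ω = X ω}
      ≤ ∫ ω, ⨆ i, (μ[{ω | X ω = i}.indicator fun _ => (1 : ℝ) | m]) ω ∂μ := by
  set post : ι → Ω → ℝ := fun i => μ[{ω | X ω = i}.indicator fun _ => (1 : ℝ) | m]
  have hT₀ : ∀ i, MeasurableSet[m₀] {ω | T ω = i} := fun i => hm _ (hT i)
  have hpost : ∀ i,
      ∫ ω in {ω | T ω = i}, post i ω ∂μ = μ.real ({ω | T ω = i} ∩ {ω | X ω = i}) := by
    intro i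
    rw [setIntegral_condExp hm ((integrable_const 1).indicator (hX i)) (hT i),
      integral_indicator_const _ (hX i), measureReal_restrict_apply (hX i), smul_eq_mul, mul_one,
      Set.inter_comm]
  calc μ.real {ω | T ω = X ω}
      = ∑ i, μ.real ({ω | T ω = i} ∩ {ω | X ω = i}) := by
        have hunion : {ω | T ω = X ω} = ⋃ i, {ω | T ω = i} ∩ {ω | X ω = i} := by
          ext ω
          simp only [Set.mem_ofPred_eq, Set.mem_iUnion, Set.mem_inter_iff]
          exact ⟨fun h => ⟨X ω, h, rfl⟩, fun ⟨_, h₁, h₂⟩ => h₁.trans h₂.symm⟩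
        rw [hunion, measureReal_iUnion_fintype (fun i j hij => Set.disjoint_left.mpr
          fun ω h₁ h₂ => hij (h₁.1.symm.trans h₂.1)) fun i => (hT₀ i).inter (hX i)]
    _ = ∑ i, ∫ ω, {ω | T ω = i}.indicator (post i) ω ∂μ := by
        refine Finset.sum_congr rfl fun i _ => ?_
        rw [integral_indicator (hT₀ i), hpost]
    _ = ∫ ω, ∑ i, {ω | T ω = i}.indicator (post i) ω ∂μ :=
        (integral_finsetSum _ fun i _ => integrable_condExp.indicator (hT₀ i)).symm
    _ ≤ ∫ ω, ⨆ i, post i ω ∂μ := by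
        refine integral_mono (integrable_finsetSum _ fun i _ =>
          integrable_condExp.indicator (hT₀ i)) (Integrable.iSup fun i => integrable_condExp)
          fun ω => ?_
        have hsum : ∑ i, {ω | T ω = i}.indicator (post i) ω = post (T ω) ω := by
          rw [Finset.sum_eq_single (T ω)]
          · exact Set.indicator_of_mem (show ω ∈ {ω' | T ω' = T ω} from rfl) _
          · exact fun i _ hi =>
              Set.indicator_of_notMem (show ω ∉ {ω' | T ω' = i} from fun h => hi h.symm) _
          · exact fun h => absurd (Finset.mem_univ _) h
        rw [hsum]
        exact le_ciSup (f := fun i => post i ω) (Set.finite_range _).bddAbove (T ω)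

end Posterior

lemma transM_nonneg {q : ℕ} {p : ℝ} (hp0 : 0 ≤ p) (hp1 : p ≤ 1) (a b : Fin q) :
    0 ≤ transM q p a b := by
  have : (1 : ℝ) ≤ q := by exact_mod_cast a.pos
  unfold transM
  split_ifs <;> first | linarith | exact div_nonneg hp0 (by linarith)

lemma sum_transM {q : ℕ} (hq : 2 ≤ q) (p : ℝ) (a : Fin q) : ∑ b, transM q p a b = 1 := by
  have hq' : (q : ℝ) - 1 ≠ 0 := by
    have : (2 : ℝ) ≤ q := by exact_mod_cast hq
    linarith
  have h : ∀ b, transM q p a b = p / (q - 1) + if a = b then 1 - p - p / (q - 1) else 0 := by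
    intro b
    unfold transM
    split_ifs <;> ring
  simp only [h, Finset.sum_add_distrib, Finset.sum_ite_eq, Finset.mem_univ, if_true,
    Finset.sum_const, Finset.card_univ, Fintype.card_fin, nsmul_eq_mul]
  field_simp
  ring

lemma sum_transM_ne {q : ℕ} (hq : 2 ≤ q) (p : ℝ) (a : Fin q) :
    ∑ b, (if b = a then 0 else transM q p a b) = p := by
  have h : ∀ b, (if b = a then 0 else transM q p a b)
      = transM q p a b - if a = b then 1 - p else 0 := by
    intro b
    by_cases hb : b = a
    · simp [hb, transM]
    · simp [hb, Ne.symm hb]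
  simp only [h, Finset.sum_sub_distrib, sum_transM hq, Finset.sum_ite_eq, Finset.mem_univ, if_true]
  ring

lemma one_sub_mul_div_sub_one_mem_Icc {p q : ℝ} (hq : 2 ≤ q) (hp0 : 0 < p) (hp : p ≤ 1 / 2) :
    1 - p * q / (q - 1) ∈ Set.Icc 0 1 := by
  have hq1 : 0 < q - 1 := by linarith
  have hpos : 0 < p * q / (q - 1) := div_pos (by positivity) hq1
  have hle : p * q / (q - 1) ≤ 2 * p := by
    rw [div_le_iff₀ hq1]
    nlinarith
  constructor <;> linarith

lemma two_mul_sqrt_pow_le {d : ℕ} {p D : ℝ} (hp0 : 0 < p) (hp : p < 0.01) (hD : 159 ≤ D)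
    (hDd : D ≤ 0.16 * d) : (2 * √(p + 2 * p / D)) ^ d ≤ 2 * p / D := by
  set E := 2 * p / D
  have hDpos : 0 < D := by linarith
  have hED : E * D = 2 * p := div_mul_cancel₀ _ hDpos.ne'
  have hE0 : 0 < E := by positivity
  have hE : E ≤ p / 50 := by nlinarith
  set x := 2 * √(p + E)
  have hx0 : 0 ≤ x := by positivity
  have hx2 : x ^ 2 = 4 * (p + E) := by
    rw [mul_pow, Real.sq_sqrt (by positivity)]; norm_num
  have hx : x ≤ 1 / 4 := by nlinarith
  obtain ⟨n, rfl⟩ : ∃ n, d = n + 2 := ⟨d - 2, by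
    have : (2 : ℝ) ≤ d := by linarith
    have : 2 ≤ d := by exact_mod_cast this
    omega⟩
  have h4 : 1 + n * 3 ≤ (4 : ℝ) ^ n := by
    have := one_add_mul_le_pow (by norm_num : (-2 : ℝ) ≤ 3) n
    norm_num at this
    exact this
  push_cast at hDd
  calc x ^ (n + 2) = x ^ 2 * x ^ n := by ring
    _ ≤ 4 * (p + E) * (1 / 4) ^ n := by
        rw [hx2]; gcongr
    _ ≤ E := by
        rw [div_pow, one_pow, ← div_eq_mul_one_div, div_le_iff₀ (by positivity)]
        nlinarith

namespace BroadcastTree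

open Finset

variable {p : ℝ} {q d : ℕ}

/-- `LTree q d k`: a labelling by `Fin q` of the complete `d`-ary tree of depth `k`, stored as
the root label together with the labellings of the `d` subtrees of the root. -/
abbrev LTree (q d : ℕ) : ℕ → Type
  | 0 => Fin q
  | k + 1 => Fin q × (Fin d → LTree q d k)

instance instFintypeLTree : (k : ℕ) → Fintype (LTree q d k)
  | 0 => inferInstanceAs (Fintype (Fin q))
  | k + 1 =>
    have := instFintypeLTree k
    inferInstanceAs (Fintype (Fin q × (Fin d → LTree q d k)))

def root : {k : ℕ} → LTree q d k → Fin q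
  | 0, t => t
  | _ + 1, t => t.1

/-- Restriction of a labelling of the infinite tree to depth `k`. The `c`-th child of the vertex
`v` is `c :: v`, so the subtree of the `c`-th child of the root consists of the `v ++ [c]`. -/
def restrict : (k : ℕ) → (List (Fin d) → Fin q) → LTree q d k
  | 0, ℓ => ℓ []
  | k + 1, ℓ => (ℓ [], fun c => restrict k fun v => ℓ (v ++ [c]))

def labelRev : {k : ℕ} → LTree q d k → List (Fin d) → Fin q
  | 0, t, _ => t
  | _ + 1, t, [] => t.1
  | _ + 1, t, c :: u => labelRev (t.2 c) u

/-- The label of the vertex `v`, whose path from the root is `v.reverse`; junk if `v` is deeper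
than `k`. -/
def label {k : ℕ} (t : LTree q d k) (v : List (Fin d)) : Fin q :=
  labelRev t v.reverse

@[simp] lemma root_mk {k : ℕ} (a : Fin q) (f : Fin d → LTree q d k) :
    root (k := k + 1) (a, f) = a :=
  rfl

@[simp] lemma root_restrict (k : ℕ) (ℓ : List (Fin d) → Fin q) : root (restrict k ℓ) = ℓ [] := by
  cases k <;> rfl

@[simp] lemma label_nil {k : ℕ} (t : LTree q d k) : label t [] = root t := by
  cases k <;> rfl

@[simp] lemma label_append_singleton {k : ℕ} (t : LTree q d (k + 1)) (v : List (Fin d))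
    (c : Fin d) :
    label t (v ++ [c]) = label (t.2 c) v := by
  simp [label, labelRev]

lemma label_restrict : ∀ (k : ℕ) (ℓ : List (Fin d) → Fin q) (v : List (Fin d)), v.length ≤ k →
    label (restrict k ℓ) v = ℓ v
  | 0, ℓ, v, hv => by rw [List.eq_nil_of_length_eq_zero (Nat.le_zero.mp hv)]; rfl
  | k + 1, ℓ, v, hv => by
    rcases List.eq_nil_or_concat v with rfl | ⟨u, c, rfl⟩
    · rfl
    · rw [List.concat_eq_append] at hv ⊢
      exact (label_append_singleton _ u c).trans
        (label_restrict k _ u (by simpa using hv))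

lemma restrict_label : ∀ {k : ℕ} (t : LTree q d k), restrict k (label t) = t
  | 0, _ => rfl
  | k + 1, (a, f) => by
    simp only [restrict, label_nil, label_append_singleton]
    exact Prod.ext rfl (funext fun c => restrict_label (f c))

lemma restrict_congr : ∀ {k : ℕ} {ℓ ℓ' : List (Fin d) → Fin q},
    (∀ v, v.length ≤ k → ℓ v = ℓ' v) → restrict k ℓ = restrict k ℓ'
  | 0, _, _, h => h [] le_rfl
  | k + 1, _, _, h => Prod.ext (h [] (Nat.zero_le _)) <| funext fun c =>
      restrict_congr fun v hv => h _ (by simpa using hv)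

lemma restrict_eq_iff {k : ℕ} {ℓ : List (Fin d) → Fin q} {t : LTree q d k} :
    restrict k ℓ = t ↔ ∀ v, v.length ≤ k → ℓ v = label t v := by
  constructor
  · rintro rfl v hv
    exact (label_restrict k ℓ v hv).symm
  · intro h
    rw [← restrict_label t]
    exact restrict_congr h

variable (p) in
/-- The probability of a labelling given its root label: the product of the transition
probabilities along its edges. -/
noncomputable def weight : {k : ℕ} → LTree q d k → ℝ
  | 0, _ => 1
  | _ + 1, t => ∏ c, transM q p t.1 (root (t.2 c)) * weight (t.2 c)

variable (p) in
/-- Law of the subtree of a child of a vertex labelled `a`. -/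
noncomputable def childWeight {k : ℕ} (a : Fin q) (t : LTree q d k) : ℝ :=
  transM q p a (root t) * weight p t

lemma weight_mk {k : ℕ} (a : Fin q) (f : Fin d → LTree q d k) :
    weight p (k := k + 1) (a, f) = ∏ c, childWeight p a (f c) :=
  rfl

lemma weight_nonneg (hp0 : 0 ≤ p) (hp1 : p ≤ 1) : ∀ {k : ℕ} (t : LTree q d k), 0 ≤ weight p t
  | 0, _ => zero_le_one
  | _ + 1, _ => prod_nonneg fun _ _ =>
      mul_nonneg (transM_nonneg hp0 hp1 _ _) (weight_nonneg hp0 hp1 _)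

lemma childWeight_nonneg (hp0 : 0 ≤ p) (hp1 : p ≤ 1) {k : ℕ} (a : Fin q) (t : LTree q d k) :
    0 ≤ childWeight p a t :=
  mul_nonneg (transM_nonneg hp0 hp1 _ _) (weight_nonneg hp0 hp1 t)

lemma sum_weight_mk {k : ℕ} (a : Fin q) :
    ∑ f : Fin d → LTree q d k, weight p (k := k + 1) (a, f)
      = (∑ t : LTree q d k, childWeight p a t) ^ d :=
  (Fintype.sum_pow (childWeight p a) d).symm

lemma sum_mul_weight (hq : 2 ≤ q) : ∀ {k : ℕ} (F : Fin q → ℝ),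
    ∑ t : LTree q d k, F (root t) * weight p t = ∑ a, F a
  | 0, F => by simp [weight, root]
  | k + 1, F => by
    rw [Fintype.sum_prod_type]
    refine sum_congr rfl fun a _ => ?_
    simp only [root_mk]
    have hchild : ∑ t : LTree q d k, childWeight p a t = 1 :=
      (sum_mul_weight hq (transM q p a)).trans (sum_transM hq p a)
    rw [← mul_sum, sum_weight_mk, hchild, one_pow, mul_one]

lemma sum_childWeight (hq : 2 ≤ q) {k : ℕ} (a : Fin q) :
    ∑ t : LTree q d k, childWeight p a t = 1 :=
  (sum_mul_weight hq (transM q p a)).trans (sum_transM hq p a)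

variable (p) in
noncomputable def edgeProd (k : ℕ) (ℓ : List (Fin d) → Fin q) : ℝ :=
  ∏ j ∈ range k, ∏ f : Fin j → Fin d, ∏ i : Fin d,
    transM q p (ℓ (List.ofFn f)) (ℓ (i :: List.ofFn f))

lemma edgeProd_succ (k : ℕ) (ℓ : List (Fin d) → Fin q) :
    edgeProd p (k + 1) ℓ
      = ∏ c, transM q p (ℓ []) (ℓ [c]) * edgeProd p k fun v => ℓ (v ++ [c]) := by
  rw [edgeProd, prod_range_succ', mul_comm, prod_mul_distrib]
  congr 1
  · simp
  · simp only [Fintype.prod_pi_fin_succ_snoc, List.ofFn_snoc]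
    exact Finset.prod_comm

lemma weight_restrict : ∀ (k : ℕ) (ℓ : List (Fin d) → Fin q),
    weight p (restrict k ℓ) = edgeProd p k ℓ
  | 0, _ => rfl
  | k + 1, ℓ => by
    rw [edgeProd_succ, restrict, weight_mk]
    refine prod_congr rfl fun c _ => ?_
    rw [childWeight, root_restrict, weight_restrict k]
    rfl

variable (p) in
/-- The labels up to depth `k` follow the broadcast process with a uniform root label. -/
def HasBroadcastLaw {Ω : Type} [MeasurableSpace Ω] (μ : Measure Ω) (σ : List (Fin d) → Ω → Fin q)
    (k : ℕ) : Prop :=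
  ∀ ℓ : List (Fin d) → Fin q,
    (μ {ω | ∀ v : List (Fin d), v.length ≤ k → σ v ω = ℓ v}).toReal = (q : ℝ)⁻¹ * edgeProd p k ℓ

section Law

variable {Ω : Type} {σ : List (Fin d) → Ω → Fin q}

lemma restrict_preimage_singleton (k : ℕ) (t : LTree q d k) :
    (fun ω => restrict k (σ · ω)) ⁻¹' {t}
      = {ω | ∀ v : List (Fin d), v.length ≤ k → σ v ω = label t v} := by
  ext ω
  exact restrict_eq_iff

variable [MeasurableSpace Ω] {μ : Measure Ω}

theorem measureReal_restrict_preimage [IsFiniteMeasure μ] (hσ : ∀ v, Measurable (σ v)) {k : ℕ}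
    (hlaw : HasBroadcastLaw p μ σ k) (S : Finset (LTree q d k)) :
    μ.real ((fun ω => restrict k (σ · ω)) ⁻¹' S) = ∑ t ∈ S, (q : ℝ)⁻¹ * weight p t := by
  have hmeas (t : LTree q d k) : MeasurableSet ((fun ω => restrict k (σ · ω)) ⁻¹' {t}) := by
    rw [restrict_preimage_singleton]
    simp only [Set.ofPred_forall]
    exact .iInter fun v => .iInter fun _ => hσ v (measurableSet_singleton _)
  rw [← sum_measureReal_preimage_singleton S fun t _ => hmeas t]
  refine sum_congr rfl fun t _ => ?_
  rw [restrict_preimage_singleton, measureReal_def, hlaw, ← weight_restrict, restrict_label]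

end Law

variable [NeZero q]

noncomputable def recMaj : {k : ℕ} → LTree q d k → Fin q
  | 0, t => t
  | _ + 1, t => plurality fun c => recMaj (t.2 c)

lemma recMaj_mk {k : ℕ} (a : Fin q) (f : Fin d → LTree q d k) :
    recMaj (k := k + 1) (a, f) = plurality fun c => recMaj (f c) :=
  rfl

variable (p d) in
/-- The probability that `recMaj` misses the root label, given that it is `a`. -/
noncomputable def errProb (k : ℕ) (a : Fin q) : ℝ :=
  ∑ t : LTree q d k with root t = a ∧ recMaj t ≠ a, weight p t

lemma errProb_zero (a : Fin q) : errProb p d 0 a = 0 :=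
  sum_eq_zero fun t ht => by simp [root, recMaj] at ht

lemma errProb_succ (k : ℕ) (a : Fin q) :
    errProb p d (k + 1) a = ∑ f : Fin d → LTree q d k with plurality (fun c => recMaj (f c)) ≠ a,
      ∏ c, childWeight p a (f c) := by
  rw [errProb, sum_filter, Fintype.sum_prod_type]
  rw [Fintype.sum_eq_single a fun b hb => sum_eq_zero fun f _ => if_neg fun h => hb h.1,
    sum_filter]
  simp only [root_mk, recMaj_mk, weight_mk, true_and]

lemma sum_childWeight_recMaj_ne_le (hq : 2 ≤ q) (hp0 : 0 ≤ p) (hp1 : p ≤ 1) (k : ℕ) (a : Fin q) :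
    ∑ t : LTree q d k with recMaj t ≠ a, childWeight p a t ≤ p + errProb p d k a := by
  have hpoint : ∀ t : LTree q d k, (if recMaj t ≠ a then childWeight p a t else 0)
      ≤ (if root t = a then 0 else transM q p a (root t)) * weight p t
        + if root t = a ∧ recMaj t ≠ a then weight p t else 0 := by
    intro t
    have hw := weight_nonneg hp0 hp1 t
    have hT := transM_nonneg hp0 hp1 a (root t)
    unfold childWeight
    by_cases hr : root t = a
    · simp only [hr, transM, if_true, true_and, zero_mul, zero_add]
      split_ifs <;> nlinarith
    · simp only [hr, if_false, false_and]
      split_ifs <;> nlinarith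
  calc ∑ t : LTree q d k with recMaj t ≠ a, childWeight p a t
      ≤ ∑ t : LTree q d k, ((if root t = a then 0 else transM q p a (root t)) * weight p t
          + if root t = a ∧ recMaj t ≠ a then weight p t else 0) := by
        rw [sum_filter]; exact sum_le_sum fun t _ => hpoint t
    _ = p + errProb p d k a := by
        rw [sum_add_distrib, sum_mul_weight hq (fun b => if b = a then 0 else transM q p a b),
          sum_transM_ne hq, errProb, sum_filter]

theorem errProb_le (hq : 2 ≤ q) (hp0 : 0 ≤ p) (hp1 : p ≤ 1) {E : ℝ} (hE0 : 0 ≤ E)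
    (hpE0 : 0 < p + E) (hpE1 : p + E ≤ 1) (hE : (2 * √(p + E)) ^ d ≤ E) :
    ∀ (k : ℕ) (a : Fin q), errProb p d k a ≤ E
  | 0, a => (errProb_zero a).trans_le hE0
  | k + 1, a => by
    rw [errProb_succ]
    refine le_trans ?_ (Fintype.card_fin d ▸ hE)
    exact sum_prod_plurality_ne_le recMaj (childWeight p a) (childWeight_nonneg hp0 hp1 a)
      (sum_childWeight hq a) a hpE0 hpE1
      ((sum_childWeight_recMaj_ne_le hq hp0 hp1 k a).trans
        (add_le_add_right (errProb_le hq hp0 hp1 hE0 hpE0 hpE1 hE k a) p))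

lemma sum_weight_recMaj_ne_root (k : ℕ) :
    ∑ t : LTree q d k with recMaj t ≠ root t, weight p t = ∑ a : Fin q, errProb p d k a := by
  rw [← sum_fiberwise _ root]
  refine sum_congr rfl fun a _ => ?_
  rw [errProb, filter_filter]
  refine sum_congr (filter_congr fun t _ => ?_) fun _ _ => rfl
  constructor
  · rintro ⟨h, rfl⟩; exact ⟨rfl, h⟩
  · rintro ⟨rfl, h⟩; exact ⟨h, rfl⟩

lemma one_sub_le_sum_weight_recMaj_eq_root (hq : 2 ≤ q) {k : ℕ} {E : ℝ}
    (hE : ∀ a : Fin q, errProb p d k a ≤ E) :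
    1 - E ≤ ∑ t : LTree q d k with recMaj t = root t, (q : ℝ)⁻¹ * weight p t := by
  have hq0 : (0 : ℝ) < q := by exact_mod_cast (NeZero.pos q)
  have htotal : ∑ t : LTree q d k, weight p t = q := by
    simpa using sum_mul_weight (d := d) (p := p) hq (k := k) fun _ => 1
  have hsplit := sum_filter_add_sum_filter_not univ (fun t : LTree q d k => recMaj t = root t)
    (weight p)
  rw [htotal, sum_weight_recMaj_ne_root] at hsplit
  have hbad : ∑ a : Fin q, errProb p d k a ≤ q * E := by
    simpa using sum_le_sum fun a (_ : a ∈ univ) => hE a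
  calc 1 - E = (q : ℝ)⁻¹ * (q - q * E) := by field_simp
    _ ≤ (q : ℝ)⁻¹ * ∑ t : LTree q d k with recMaj t = root t, weight p t := by
        gcongr; linarith
    _ = _ := mul_sum _ _ _

/-- `recMaj` read off the labels at depth `k` alone; the vertex `List.ofFn f` is indexed by `f`. -/
noncomputable def leafMaj : (k : ℕ) → ((Fin k → Fin d) → Fin q) → Fin q
  | 0, x => x Fin.elim0
  | k + 1, x => plurality fun c => leafMaj k fun g => x (Fin.snoc g c)

lemma leafMaj_ofFn : ∀ (k : ℕ) (ℓ : List (Fin d) → Fin q),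
    leafMaj k (fun f => ℓ (List.ofFn f)) = recMaj (restrict k ℓ)
  | 0, _ => rfl
  | k + 1, ℓ => by
    simp only [leafMaj, List.ofFn_snoc]
    exact congrArg plurality (funext fun c => leafMaj_ofFn k fun v => ℓ (v ++ [c]))

theorem sum_weight_recMaj_eq_root_le_optRecon {Ω : Type} [MeasurableSpace Ω] {μ : Measure Ω}
    [IsProbabilityMeasure μ] {σ : List (Fin d) → Ω → Fin q} (hσ : ∀ v, Measurable (σ v)) {k : ℕ}
    (hlaw : HasBroadcastLaw p μ σ k) :
    ∑ t : LTree q d k with recMaj t = root t, (q : ℝ)⁻¹ * weight p t ≤ optRecon μ (σ []) σ k := by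
  set leaves : Ω → (Fin k → Fin d) → Fin q := fun ω f => σ (List.ofFn f) ω
  have hleaves : Measurable leaves := measurable_pi_lambda _ fun f => hσ _
  have hgood : {ω | leafMaj k (leaves ω) = σ [] ω}
      = (fun ω => restrict k (σ · ω)) ⁻¹' ↑({t | recMaj t = root t} : Finset (LTree q d k)) := by
    ext ω
    have h := leafMaj_ofFn k (σ · ω)
    beta_reduce at h
    simp [leaves, h]
  rw [← measureReal_restrict_preimage hσ hlaw, ← hgood]
  exact measureReal_eq_le_integral_iSup_condExp hleaves.comap_le
    (fun i => hσ [] (measurableSet_singleton i))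
    fun i => ⟨{x | leafMaj k x = i}, .of_discrete, rfl⟩

theorem one_sub_two_mul_div_le_optRecon (hq : 2 ≤ q) (hp0 : 0 < p) (hp : p < 0.01) {D : ℝ}
    (hD : 159 ≤ D) (hDd : D ≤ 0.16 * d) {Ω : Type} [MeasurableSpace Ω] {μ : Measure Ω}
    [IsProbabilityMeasure μ] {σ : List (Fin d) → Ω → Fin q} (hσ : ∀ v, Measurable (σ v)) {k : ℕ}
    (hlaw : HasBroadcastLaw p μ σ k) :
    1 - 2 * p / D ≤ optRecon μ (σ []) σ k := by
  have hE : 2 * p / D ≤ p := by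
    rw [div_le_iff₀ (by linarith)]
    nlinarith
  have herr := errProb_le hq hp0.le (by linarith) (by positivity) (by positivity) (by linarith)
    (two_mul_sqrt_pow_le hp0 hp hD hDd) k
  exact (one_sub_le_sum_weight_recMaj_eq_root hq herr).trans
    (sum_weight_recMaj_eq_root_le_optRecon hσ hlaw)

end BroadcastTree

open BroadcastTree in
/-- Iterated-majority bound: there is a constant `C(q)` such that if
`λ²d > C(q)` and `p < 0.01`, then there is `k₀ = k₀(d, λ, q)` so that for all `k ≥ k₀`,
`E_k ≥ 1 − 2(1−λ)(q−1)/(q(0.16d − λ))`. -/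
theorem broadcast_iterated_majority (q : ℕ) (hq : 3 ≤ q) :
    ∃ C : ℝ, 0 < C ∧
      ∀ (d : ℕ), 1 ≤ d →
      ∀ (p : ℝ), 0 < p → p < 1 →
      ∀ (Ω : Type) [MeasurableSpace Ω] (μ : Measure Ω) [IsProbabilityMeasure μ]
        (σ : List (Fin d) → Ω → Fin q), (∀ v, Measurable (σ v)) →
        (∀ (k : ℕ) (ℓ : List (Fin d) → Fin q),
          (μ {ω | ∀ v : List (Fin d), v.length ≤ k → σ v ω = ℓ v}).toReal
            = ((q : ℝ))⁻¹ * ∏ j ∈ Finset.range k, ∏ f : Fin j → Fin d, ∏ i : Fin d,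
                transM q p (ℓ (List.ofFn f)) (ℓ (i :: List.ofFn f))) →
      ∀ (lam : ℝ), lam = 1 - p * q / ((q : ℝ) - 1) →
        lam ^ 2 * d > C → p < 0.01 →
        ∃ k₀ : ℕ, ∀ k : ℕ, k₀ ≤ k →
          optRecon μ (σ []) σ k
            ≥ 1 - 2 * (1 - lam) * ((q : ℝ) - 1) / ((q : ℝ) * (0.16 * d - lam)) := by
  refine ⟨1000, by norm_num, fun d _ p hp0 _ Ω _ μ _ σ hσ hlaw lam hlam hC hp =>
    ⟨0, fun k _ => ?_⟩⟩
  have : NeZero q := ⟨by omega⟩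
  have hq3 : (3 : ℝ) ≤ q := by exact_mod_cast hq
  have hq1 : (q : ℝ) - 1 ≠ 0 := by linarith
  obtain ⟨hlam0, hlam1⟩ := hlam ▸ one_sub_mul_div_sub_one_mem_Icc (by linarith) hp0 (by linarith)
  have hd : 1000 < (d : ℝ) := by nlinarith
  have htarget : 2 * (1 - lam) * ((q : ℝ) - 1) / ((q : ℝ) * (0.16 * d - lam))
      = 2 * p / (0.16 * d - lam) := by
    rw [hlam]
    field_simp
    ring
  rw [ge_iff_le, htarget]
  exact one_sub_two_mul_div_le_optRecon (by omega) hp0 hp (by linarith) (by linarith) hσ (hlaw k)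
end
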